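/- The automorphism group of the Niemeier lattice N of type A_1^{24} is isomorphic to the semidirect product (Z/2)^{24} ⋊ M_{24}, where (Z/2)^{24} acts by sign changes f_n ↦ -f_n and M_{24} acts by permuting the roots f_1,...,f_{24}. -/

import Mathlib

/-!
A norm-2 vector `v = w / 2` of `N` has `∑ wᵢ² = 4`, so its parity word `w mod 2 ∈ 𝒢₂₄` has weight
at most 4; as the Golay code has minimum weight 8 (checked by enumerating its `2¹²` codewords as
24-bit masks) the parity word vanishes, `w = 2u` with `∑ uᵢ² = 1`, and `v = ±f_n`. An automorphism
therefore sends each `f_n` to some `±f_m`, so it is a signed permutation `v ↦ (i ↦ ±v (σ⁻¹ i))`,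
and a signed permutation preserves `N` exactly when `σ` preserves the Golay code. Since
`σ ε σ⁻¹ = ε ∘ σ⁻¹` for a sign change `ε`, the signs and the permutation read off from the images
of the `f_n` give the semidirect product decomposition.
-/

def indic (s : Finset ℕ) : Fin 24 → ZMod 2 := fun i => if (i : ℕ) + 1 ∈ s then 1 else 0

def golayBasisSets : Fin 12 → Finset ℕ :=
  ![{1,2,16,18,5,12,22,3}, {7,4,19,10,12,15,8,16}, {23,3,9,19,13,18,8,11},
    {6,3,22,4,21,17,15,9}, {20,10,11,17,14,13,22,12}, {24,2,10,19,9,5,14,21},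
    {8,7,15,17,11,23,18,16}, {16,1,2,21,4,7,8,18}, {18,1,16,8,23,13,14,5},
    {8,7,15,9,19,23,4,22,13,18,1,16}, {18,23,13,22,3,1,11,10,2,16,7,8},
    {16,1,2,10,12,7,5,9,15,8,23,18}]

def golayCode : Submodule (ZMod 2) (Fin 24 → ZMod 2) :=
  Submodule.span (ZMod 2) (Set.range fun i => indic (golayBasisSets i))

/-- The ambient 24-dimensional rational quadratic space. -/
abbrev V24 := Fin 24 → ℚ

/-- The bilinear form on `V24` for which the standard basis vectors have norm 2. -/
def B24 (u v : V24) : ℚ := 2 * ∑ i, u i * v i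

/-- The generators `f_n` of the root sublattice `R` of type `A₁²⁴`. -/
def f24 (n : Fin 24) : V24 := fun i => if i = n then 1 else 0

/-- The Niemeier lattice `N` of type `A₁²⁴`:
`N = { v ∈ (1/2)R : (v mod R) ∈ 𝒢₂₄ }`. -/
def NSet : Set V24 :=
  { v | ∃ w : Fin 24 → ℤ, (∀ i, v i = (w i : ℚ) / 2) ∧
      (fun i => ((w i : ZMod 2))) ∈ golayCode }


/-- The Mathieu group `M₂₄`, realised as the subgroup of permutations of the 24
coordinates preserving the extended binary Golay code. -/
def M24 : Subgroup (Equiv.Perm (Fin 24)) where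
  carrier := { σ | ∀ v : Fin 24 → ZMod 2, v ∈ golayCode ↔ v ∘ σ ∈ golayCode }
  one_mem' := by intro v; simp
  mul_mem' := by
    intro a b ha hb v
    rw [show v ∘ ⇑(a * b) = (v ∘ ⇑a) ∘ ⇑b by ext x; simp [Equiv.Perm.mul_apply]]
    exact (ha v).trans (hb (v ∘ ⇑a))
  inv_mem' := by
    intro a ha v
    have h := ha (v ∘ ⇑a⁻¹)
    have h2 : (v ∘ ⇑a⁻¹) ∘ ⇑a = v := by ext x; simp
    rw [h2] at h
    exact h.symm

/-- The group of automorphisms of the Niemeier lattice `N`: linear automorphisms of the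
ambient space preserving the lattice and the bilinear form. -/
def AutN : Subgroup (V24 ≃ₗ[ℚ] V24) where
  carrier := { g | (∀ v, v ∈ NSet ↔ g v ∈ NSet) ∧ ∀ u v, B24 (g u) (g v) = B24 u v }
  one_mem' := by constructor <;> intro v <;> simp
  mul_mem' := by
    rintro a b ⟨ha1, ha2⟩ ⟨hb1, hb2⟩
    refine ⟨fun v => ?_, fun u v => ?_⟩
    · rw [hb1 v, ha1 (b v)]; rfl
    · show B24 (a (b u)) (a (b v)) = _
      rw [ha2, hb2]
  inv_mem' := by
    rintro a ⟨ha1, ha2⟩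
    have hinv : ∀ v, a (a⁻¹ v) = v := fun v => a.apply_symm_apply v
    refine ⟨fun v => ?_, fun u v => ?_⟩
    · have := ha1 (a⁻¹ v)
      rw [hinv] at this
      exact this.symm
    · have := ha2 (a⁻¹ u) (a⁻¹ v)
      rw [hinv, hinv] at this
      exact this.symm

/-- The action of a permutation of the 24 coordinates on the group `(ℤ/2)²⁴`
(written multiplicatively) of sign vectors. -/
def permMulAut (σ : Equiv.Perm (Fin 24)) : MulAut (Multiplicative (Fin 24 → ZMod 2)) where
  toFun e := Multiplicative.ofAdd (Multiplicative.toAdd e ∘ ⇑σ⁻¹)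
  invFun e := Multiplicative.ofAdd (Multiplicative.toAdd e ∘ ⇑σ)
  left_inv e := by
    show Multiplicative.ofAdd ((Multiplicative.toAdd e ∘ ⇑σ⁻¹) ∘ ⇑σ) = e
    have : (Multiplicative.toAdd e ∘ ⇑σ⁻¹) ∘ ⇑σ = Multiplicative.toAdd e := by
      ext i; simp
    rw [this]
    rfl
  right_inv e := by
    show Multiplicative.ofAdd ((Multiplicative.toAdd e ∘ ⇑σ) ∘ ⇑σ⁻¹) = e
    have : (Multiplicative.toAdd e ∘ ⇑σ) ∘ ⇑σ⁻¹ = Multiplicative.toAdd e := by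
      ext i; simp
    rw [this]
    rfl
  map_mul' e f := rfl

/-- The homomorphism `M₂₄ →* Aut((ℤ/2)²⁴)` given by permutation of coordinates. -/
def φ24 : M24 →* MulAut (Multiplicative (Fin 24 → ZMod 2)) where
  toFun σ := permMulAut σ.1
  map_one' := by
    ext e
    rfl
  map_mul' σ τ := by
    ext e
    rfl

open Function Matrix

lemma zmod_two_eq_zero_or_one (x : ZMod 2) : x = 0 ∨ x = 1 := by
  revert x; decide

section SignedPermutation

variable {ι R : Type*} [CommRing R]

def zmodSign (x : ZMod 2) : R := if x = 1 then -1 else 1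

@[simp]
lemma zmodSign_zero : zmodSign 0 = (1 : R) := if_neg zero_ne_one

@[simp]
lemma zmodSign_one : zmodSign 1 = (-1 : R) := if_pos rfl

lemma zmodSign_add (x y : ZMod 2) : zmodSign (x + y) = (zmodSign x * zmodSign y : R) := by
  obtain rfl | rfl := zmod_two_eq_zero_or_one x <;>
    obtain rfl | rfl := zmod_two_eq_zero_or_one y <;> simp [CharTwo.add_self_eq_zero]

lemma zmodSign_mul_self (x : ZMod 2) : zmodSign x * zmodSign x = (1 : R) := by
  rw [← zmodSign_add, CharTwo.add_self_eq_zero, zmodSign_zero]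

lemma zmodSign_ne_zero [Nontrivial R] (x : ZMod 2) : zmodSign x ≠ (0 : R) :=
  left_ne_zero_of_mul_eq_one (zmodSign_mul_self x)

lemma zmodSign_eq_one_iff [Nontrivial R] (hR : ringChar R ≠ 2) {x : ZMod 2} :
    zmodSign x = (1 : R) ↔ x = 0 := by
  obtain rfl | rfl := zmod_two_eq_zero_or_one x
  · simp
  · simpa using Ring.neg_one_ne_one_of_char_ne_two hR

@[simp, norm_cast]
lemma Int.cast_zmodSign (x : ZMod 2) : ((zmodSign x : ℤ) : R) = zmodSign x := by
  obtain rfl | rfl := zmod_two_eq_zero_or_one x <;> simp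

def signChange : Multiplicative (ι → ZMod 2) →* (ι → R) ≃ₗ[R] (ι → R) where
  toFun ε :=
    { toFun v i := zmodSign (ε.toAdd i) * v i
      invFun v i := zmodSign (ε.toAdd i) * v i
      map_add' _ _ := by ext; simp [mul_add]
      map_smul' _ _ := by ext; simp [mul_left_comm]
      left_inv _ := by ext; simp [← mul_assoc, zmodSign_mul_self]
      right_inv _ := by ext; simp [← mul_assoc, zmodSign_mul_self] }
  map_one' := by ext v i; simp
  map_mul' ε δ := by ext v i; simp [zmodSign_add, mul_assoc]

@[simp]
lemma signChange_apply (ε : Multiplicative (ι → ZMod 2)) (v : ι → R) (i : ι) :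
    signChange ε v i = zmodSign (ε.toAdd i) * v i := rfl

@[simp]
lemma signChange_signChange (ε : Multiplicative (ι → ZMod 2)) (v : ι → R) :
    signChange ε (signChange ε v) = v := by
  ext i; simp [← mul_assoc, zmodSign_mul_self]

def coordPerm : Equiv.Perm ι →* (ι → R) ≃ₗ[R] (ι → R) where
  toFun σ := LinearEquiv.funCongrLeft R R σ⁻¹
  map_one' := rfl
  map_mul' _ _ := rfl

@[simp]
lemma coordPerm_apply (σ : Equiv.Perm ι) (v : ι → R) (i : ι) :
    coordPerm σ v i = v (σ⁻¹ i) := rfl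

lemma coordPerm_mul_signChange (σ : Equiv.Perm ι) (ε : Multiplicative (ι → ZMod 2)) :
    coordPerm σ * signChange ε =
      signChange (.ofAdd (ε.toAdd ∘ ⇑σ⁻¹)) * (coordPerm σ : (ι → R) ≃ₗ[R] (ι → R)) := by
  ext v i; simp

lemma signChange_dotProduct [Fintype ι] (ε : Multiplicative (ι → ZMod 2)) (u v : ι → R) :
    signChange ε u ⬝ᵥ signChange ε v = u ⬝ᵥ v := by
  refine Finset.sum_congr rfl fun i _ => ?_
  rw [signChange_apply, signChange_apply, mul_mul_mul_comm, zmodSign_mul_self, one_mul]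

lemma coordPerm_dotProduct [Fintype ι] (σ : Equiv.Perm ι) (u v : ι → R) :
    coordPerm σ u ⬝ᵥ coordPerm σ v = u ⬝ᵥ v :=
  Equiv.sum_comp σ⁻¹ fun i => u i * v i

variable [DecidableEq ι]

lemma signChange_single (ε : Multiplicative (ι → ZMod 2)) (n : ι) (a : R) :
    signChange ε (Pi.single n a) = Pi.single n (zmodSign (ε.toAdd n) * a) := by
  ext i; by_cases h : i = n <;> simp [h]

lemma coordPerm_single (σ : Equiv.Perm ι) (n : ι) (a : R) :
    coordPerm σ (Pi.single n a) = Pi.single (σ n) a := by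
  ext i; simp [Pi.single_apply, Equiv.symm_apply_eq]

lemma signChange_mul_coordPerm_eq_one [Nontrivial R] (hR : ringChar R ≠ 2)
    {ε : Multiplicative (ι → ZMod 2)} {σ : Equiv.Perm ι} :
    signChange ε * coordPerm σ = (1 : (ι → R) ≃ₗ[R] (ι → R)) ↔ ε = 1 ∧ σ = 1 := by
  refine ⟨fun h => ?_, by rintro ⟨rfl, rfl⟩; simp⟩
  have hsingle (n : ι) : Pi.single (σ n) (zmodSign (ε.toAdd (σ n))) = (Pi.single n 1 : ι → R) := by
    simpa [coordPerm_single, signChange_single] using LinearEquiv.congr_fun h (Pi.single n 1)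
  have hfix (n : ι) : σ n = n := by
    by_contra hn
    simpa [Pi.single_apply, hn, zmodSign_ne_zero] using congr_fun (hsingle n) (σ n)
  have hσ : σ = 1 := Equiv.ext hfix
  subst hσ
  refine ⟨?_, rfl⟩
  ext n
  simpa [zmodSign_eq_one_iff hR] using congr_fun (hsingle n) n

lemma exists_eq_signChange_mul_coordPerm [Finite ι] [Nontrivial R]
    (g : (ι → R) ≃ₗ[R] (ι → R))
    (hg : ∀ n, ∃ m, ∃ s : ZMod 2, g (Pi.single n 1) = Pi.single m (zmodSign s)) :
    ∃ ε σ, g = signChange ε * coordPerm σ := by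
  choose π s hπ using hg
  have hπ_inj : Injective π := by
    intro a b hab
    have h : (zmodSign (s b) : R) • (Pi.single a 1 : ι → R) =
        (zmodSign (s a) : R) • (Pi.single b 1 : ι → R) := by
      apply g.injective
      rw [map_smul, map_smul, hπ, hπ, hab, ← Pi.single_smul', ← Pi.single_smul', smul_eq_mul,
        smul_eq_mul, mul_comm]
    by_contra hne
    simpa [hne, zmodSign_ne_zero] using congr_fun h a
  let σ := Equiv.ofBijective π (Finite.injective_iff_bijective.mp hπ_inj)
  refine ⟨.ofAdd fun i => s (σ.symm i), σ, (Pi.basisFun R ι).ext' fun n => ?_⟩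
  simp [coordPerm_single, signChange_single, hπ, σ]

end SignedPermutation

section CodeLattice

variable {ι κ : Type*}

def codeLattice (C : Submodule (ZMod 2) (ι → ZMod 2)) : Set (ι → ℚ) :=
  { v | ∃ w : ι → ℤ, (∀ i, v i = (w i : ℚ) / 2) ∧ (fun i => ((w i : ZMod 2))) ∈ C }

lemma comp_mem_codeLattice_iff (C : Submodule (ZMod 2) (ι → ZMod 2))
    (D : Submodule (ZMod 2) (κ → ZMod 2)) (f : κ → ι) :
    (∀ v ∈ codeLattice C, v ∘ f ∈ codeLattice D) ↔ ∀ c ∈ C, c ∘ f ∈ D := by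
  refine ⟨fun h c hc => ?_, fun h v ⟨w, hw, hwC⟩ => ⟨w ∘ f, fun k => hw (f k), h _ hwC⟩⟩
  obtain ⟨w', hw', hw'D⟩ := h (fun i => ((c i).cast : ℤ) / 2)
    ⟨fun i => (c i).cast, fun i => rfl, by simpa only [ZMod.intCast_zmod_cast] using hc⟩
  convert hw'D using 1
  funext k
  have : w' k = (c (f k)).cast := by exact_mod_cast (div_left_inj' two_ne_zero).1 (hw' k).symm
  simp [this]

lemma Equiv.Perm.forall_mem_iff_comp_mem {α : Type*} (S : Set (ι → α)) (σ : Equiv.Perm ι) :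
    (∀ x, x ∈ S ↔ x ∘ σ ∈ S) ↔ (∀ x ∈ S, x ∘ σ ∈ S) ∧ ∀ x ∈ S, x ∘ ⇑σ⁻¹ ∈ S := by
  refine ⟨fun h => ⟨fun x => (h x).1, fun x hx => (h _).2 ?_⟩, fun ⟨h, h'⟩ x => ⟨h x, fun hx => ?_⟩⟩
  · simpa [Function.comp_assoc] using hx
  · simpa [Function.comp_assoc] using h' _ hx

lemma comp_perm_mem_codeLattice_iff (C : Submodule (ZMod 2) (ι → ZMod 2)) (σ : Equiv.Perm ι) :
    (∀ v, v ∈ codeLattice C ↔ v ∘ σ ∈ codeLattice C) ↔ ∀ c, c ∈ C ↔ c ∘ σ ∈ C := by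
  rw [Equiv.Perm.forall_mem_iff_comp_mem, comp_mem_codeLattice_iff, comp_mem_codeLattice_iff]
  exact (Equiv.Perm.forall_mem_iff_comp_mem (C : Set (ι → ZMod 2)) σ).symm

lemma signChange_mem_codeLattice {C : Submodule (ZMod 2) (ι → ZMod 2)}
    (ε : Multiplicative (ι → ZMod 2)) {v : ι → ℚ} (hv : v ∈ codeLattice C) :
    signChange ε v ∈ codeLattice C := by
  obtain ⟨w, hw, hwC⟩ := hv
  refine ⟨fun i => zmodSign (ε.toAdd i) * w i, fun i => ?_, ?_⟩
  · simp [hw, mul_div_assoc]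
  · convert hwC using 1
    funext i
    obtain h | h := zmod_two_eq_zero_or_one (ε.toAdd i) <;> simp [h, CharTwo.neg_eq]

lemma signChange_mem_codeLattice_iff {C : Submodule (ZMod 2) (ι → ZMod 2)}
    (ε : Multiplicative (ι → ZMod 2)) {v : ι → ℚ} :
    signChange ε v ∈ codeLattice C ↔ v ∈ codeLattice C := by
  refine ⟨fun h => ?_, signChange_mem_codeLattice ε⟩
  simpa using signChange_mem_codeLattice ε h

lemma single_mem_codeLattice [DecidableEq ι] (C : Submodule (ZMod 2) (ι → ZMod 2)) (n : ι) :
    Pi.single n 1 ∈ codeLattice C := by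
  refine ⟨Pi.single n 2, fun i => ?_, ?_⟩
  · by_cases h : i = n <;> simp [h]
  · convert C.zero_mem using 1
    funext i
    by_cases h : i = n <;> simp [h, CharTwo.two_eq_zero]

end CodeLattice

section Roots

variable {ι : Type*} [Fintype ι]

lemma hammingNorm_le_sum_sq (w : ι → ℤ) : (hammingNorm w : ℤ) ≤ ∑ i, w i ^ 2 := by
  rw [hammingNorm, Finset.card_filter]
  push_cast
  refine Finset.sum_le_sum fun i _ => ?_
  split_ifs with h
  · exact one_le_sq_iff_one_le_abs _ |>.2 (Int.one_le_abs h)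
  · positivity

variable [DecidableEq ι]

lemma exists_eq_single_zmodSign_of_sum_sq_eq_one {u : ι → ℤ} (h : ∑ i, u i ^ 2 = 1) :
    ∃ n, ∃ s : ZMod 2, u = Pi.single n (zmodSign s) := by
  have hnorm : hammingNorm u = 1 := by
    have hpos := hammingNorm_pos_iff.2 (show u ≠ 0 by rintro rfl; simp at h)
    have := hammingNorm_le_sum_sq u
    omega
  obtain ⟨n, hn⟩ := Finset.card_eq_one.1 hnorm
  have hzero (i : ι) (hi : i ≠ n) : u i = 0 := by
    by_contra hui
    have : i ∈ ({n} : Finset ι) := hn ▸ by simp [hui]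
    exact hi (Finset.mem_singleton.1 this)
  have hsq : u n ^ 2 = 1 := by
    rwa [Finset.sum_eq_single n (fun i _ hi => by simp [hzero i hi]) (by simp)] at h
  have hu : u = Pi.single n (u n) := by
    ext i
    by_cases hi : i = n
    · subst hi; simp
    · simp [hi, hzero i hi]
  obtain h1 | h1 := sq_eq_one_iff.1 hsq
  · exact ⟨n, 0, by rw [hu, h1, zmodSign_zero]⟩
  · exact ⟨n, 1, by rw [hu, h1, zmodSign_one]⟩

lemma exists_eq_single_zmodSign_of_mem_codeLattice {C : Submodule (ZMod 2) (ι → ZMod 2)}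
    (hC : ∀ c ∈ C, hammingNorm c ≤ 4 → c = 0) {v : ι → ℚ} (hv : v ∈ codeLattice C)
    (hvv : v ⬝ᵥ v = 1) : ∃ m, ∃ s : ZMod 2, v = Pi.single m (zmodSign s) := by
  obtain ⟨w, hw, hwC⟩ := hv
  have hw4 : ∑ i, w i ^ 2 = 4 := by
    have : ∑ i, (w i : ℚ) ^ 2 = 4 := by
      simp only [dotProduct, hw, ← sq, div_pow, ← Finset.sum_div] at hvv
      linarith [(div_eq_one_iff_eq (by norm_num)).1 hvv]
    exact_mod_cast this
  have heven : (fun i => (w i : ZMod 2)) = 0 := by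
    refine hC _ hwC ?_
    have := hammingNorm_comp_le_hammingNorm (fun _ => (Int.cast : ℤ → ZMod 2)) (x := w)
      fun _ => Int.cast_zero
    have := hammingNorm_le_sum_sq w
    omega
  choose u hu using fun i => (ZMod.intCast_zmod_eq_zero_iff_dvd (w i) 2).1 (congr_fun heven i)
  obtain ⟨m, s, hus⟩ := exists_eq_single_zmodSign_of_sum_sq_eq_one (u := u) <| by
    simp only [hu, mul_pow, ← Finset.mul_sum, Nat.cast_ofNat] at hw4
    linarith
  refine ⟨m, s, funext fun i => ?_⟩
  rw [hw i, hu i, hus]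
  by_cases hi : i = m <;> simp [hi]

end Roots

section BinaryWords

def bitVec (k n : ℕ) : Fin k → ZMod 2 := fun i => if n.testBit i then 1 else 0

@[simp]
lemma bitVec_zero (k : ℕ) : bitVec k 0 = 0 := by
  ext; simp [bitVec]

lemma bitVec_xor (k a b : ℕ) : bitVec k (a ^^^ b) = bitVec k a + bitVec k b := by
  ext i
  simp only [bitVec, Nat.testBit_xor, Pi.add_apply]
  cases a.testBit i <;> cases b.testBit i <;> decide

lemma hammingNorm_bitVec (k n : ℕ) :
    hammingNorm (bitVec k n) = (List.finRange k).countP fun i : Fin k => n.testBit i := by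
  simp [hammingNorm, bitVec, Fin.univ_def, List.countP_eq_length_filter, Finset.card_def]

def xorSelect : List ℕ → ℕ → ℕ
  | [], _ => 0
  | g :: gs, m => (bif m.testBit 0 then g else 0) ^^^ xorSelect gs (m / 2)

@[simp]
lemma xorSelect_zero : ∀ L : List ℕ, xorSelect L 0 = 0
  | [] => rfl
  | _ :: gs => by simp [xorSelect, xorSelect_zero gs]

lemma xorSelect_xor (L : List ℕ) (x y : ℕ) :
    xorSelect L (x ^^^ y) = xorSelect L x ^^^ xorSelect L y := by
  induction L generalizing x y with
  | nil => simp [xorSelect]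
  | cons g gs ih =>
    simp only [xorSelect, Nat.testBit_xor, Nat.xor_div_two, ih]
    cases x.testBit 0 <;> cases y.testBit 0 <;> simp [Nat.xor_assoc, Nat.xor_left_comm]

def xorSpan (k : ℕ) (L : List ℕ) : Submodule (ZMod 2) (Fin k → ZMod 2) where
  carrier := {c | ∃ m < 2 ^ L.length, c = bitVec k (xorSelect L m)}
  zero_mem' := ⟨0, by positivity, by simp⟩
  add_mem' := by
    rintro _ _ ⟨x, hx, rfl⟩ ⟨y, hy, rfl⟩
    exact ⟨x ^^^ y, Nat.xor_lt_two_pow hx hy, by rw [xorSelect_xor, bitVec_xor]⟩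
  smul_mem' t c hc := by
    obtain rfl | rfl := zmod_two_eq_zero_or_one t
    · exact ⟨0, by positivity, by simp⟩
    · simpa using hc

end BinaryWords

section Golay

-- Bit `i` of the `j`-th mask is set iff `i + 1 ∈ golayBasisSets j`.
def golayMasks : List ℕ := [2263063, 314056, 4593028, 3227948, 2702848, 9708306,
  4441280, 1212619, 4370577, 6738377, 6461127, 4377555]

lemma indic_golayBasisSets (j : Fin 12) :
    indic (golayBasisSets j) = bitVec 24 (xorSelect golayMasks (2 ^ (j : ℕ))) := by
  revert j; decide

lemma golayCode_le_xorSpan : golayCode ≤ xorSpan 24 golayMasks := by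
  rw [golayCode, Submodule.span_le]
  rintro _ ⟨j, rfl⟩
  exact ⟨2 ^ (j : ℕ), Nat.pow_lt_pow_right one_lt_two j.2, indic_golayBasisSets j⟩

set_option maxRecDepth 10000 in
lemma xorSelect_golayMasks_eq_zero_of_countP_lt : ∀ m ∈ List.range (2 ^ golayMasks.length),
    ((List.finRange 24).countP fun i : Fin 24 => (xorSelect golayMasks m).testBit i) < 8 →
      xorSelect golayMasks m = 0 := by
  decide +kernel

lemma golayCode_eq_zero_of_hammingNorm_lt {c : Fin 24 → ZMod 2} (hc : c ∈ golayCode)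
    (h : hammingNorm c < 8) : c = 0 := by
  obtain ⟨m, hm, rfl⟩ := golayCode_le_xorSpan hc
  rw [hammingNorm_bitVec] at h
  rw [xorSelect_golayMasks_eq_zero_of_countP_lt m (List.mem_range.2 hm) h, bitVec_zero]

end Golay

section Automorphisms

lemma mem_AutN_iff {g : V24 ≃ₗ[ℚ] V24} :
    g ∈ AutN ↔ (∀ v, v ∈ codeLattice golayCode ↔ g v ∈ codeLattice golayCode) ∧
      ∀ u v, g u ⬝ᵥ g v = u ⬝ᵥ v :=
  and_congr_right fun _ => forall₂_congr fun _ _ => mul_right_inj' two_ne_zero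

lemma signChange_mem_AutN (ε : Multiplicative (Fin 24 → ZMod 2)) : signChange ε ∈ AutN :=
  mem_AutN_iff.2 ⟨fun _ => (signChange_mem_codeLattice_iff ε).symm, signChange_dotProduct ε⟩

lemma coordPerm_mem_AutN_iff (σ : Equiv.Perm (Fin 24)) : coordPerm σ ∈ AutN ↔ σ ∈ M24 := by
  rw [mem_AutN_iff, ← M24.inv_mem_iff]
  exact (and_iff_left (coordPerm_dotProduct σ)).trans
    (comp_perm_mem_codeLattice_iff golayCode σ⁻¹)

lemma exists_single_of_mem_AutN {g : V24 ≃ₗ[ℚ] V24} (hg : g ∈ AutN) (n : Fin 24) :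
    ∃ m, ∃ s : ZMod 2, g (Pi.single n 1) = Pi.single m (zmodSign s) := by
  obtain ⟨hN, hdot⟩ := mem_AutN_iff.1 hg
  refine exists_eq_single_zmodSign_of_mem_codeLattice
    (fun c hc h => golayCode_eq_zero_of_hammingNorm_lt hc (by omega))
    ((hN _).1 (single_mem_codeLattice _ n)) ?_
  simp [hdot]

def signChangeAutN : Multiplicative (Fin 24 → ZMod 2) →* AutN :=
  signChange.codRestrict AutN signChange_mem_AutN

def coordPermAutN : M24 →* AutN :=
  (coordPerm.comp M24.subtype).codRestrict AutN fun σ => (coordPerm_mem_AutN_iff σ).2 σ.2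

def semidirectToAutN : Multiplicative (Fin 24 → ZMod 2) ⋊[φ24] M24 →* AutN :=
  SemidirectProduct.lift signChangeAutN coordPermAutN fun σ => MonoidHom.ext fun ε => by
    ext1
    change signChange (φ24 σ ε) = coordPerm σ.1 * signChange ε * (coordPerm σ.1)⁻¹
    rw [coordPerm_mul_signChange, mul_inv_cancel_right]
    rfl

lemma semidirectToAutN_injective : Injective semidirectToAutN := by
  refine (injective_iff_map_eq_one _).2 fun p hp => ?_
  obtain ⟨hε, hσ⟩ :=
    (signChange_mul_coordPerm_eq_one (by simp [ringChar.eq_zero])).1 (congrArg Subtype.val hp)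
  exact SemidirectProduct.ext hε (Subtype.ext hσ)

lemma semidirectToAutN_surjective : Surjective semidirectToAutN := by
  rintro ⟨g, hg⟩
  obtain ⟨ε, σ, rfl⟩ := exists_eq_signChange_mul_coordPerm g (exists_single_of_mem_AutN hg)
  have hσ : σ ∈ M24 := (coordPerm_mem_AutN_iff σ).1 <| by
    simpa using AutN.mul_mem (AutN.inv_mem (signChange_mem_AutN ε)) hg
  exact ⟨⟨ε, ⟨σ, hσ⟩⟩, rfl⟩

noncomputable def semidirectEquivAutN : Multiplicative (Fin 24 → ZMod 2) ⋊[φ24] M24 ≃* AutN :=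
  MulEquiv.ofBijective semidirectToAutN ⟨semidirectToAutN_injective, semidirectToAutN_surjective⟩

end Automorphisms

theorem autN_iso_semidirect :
    ∃ Φ : (Multiplicative (Fin 24 → ZMod 2)) ⋊[φ24] M24 ≃* AutN,
      (∀ ε : Multiplicative (Fin 24 → ZMod 2), ∀ v : V24, ∀ i : Fin 24,
        ((Φ (SemidirectProduct.inl ε) : V24 ≃ₗ[ℚ] V24) v) i =
          (if Multiplicative.toAdd ε i = 1 then -1 else 1) * v i) ∧
      (∀ σ : M24, ∀ v : V24, ∀ i : Fin 24,
        ((Φ (SemidirectProduct.inr σ) : V24 ≃ₗ[ℚ] V24) v) i = v ((σ : Equiv.Perm (Fin 24))⁻¹ i)) := by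
  refine ⟨semidirectEquivAutN, fun ε v i => rfl, fun σ v i => ?_⟩
  simp only [semidirectEquivAutN, MulEquiv.ofBijective_apply, semidirectToAutN,
    SemidirectProduct.lift_inr]
  rfl
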